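/- Let λ > 0 and let Q be the probability measure on ℝ² with density q(v) = (λ²/(2π))·exp(−λ‖v‖₂). Let P be the probability measure on ℝ² with density f(v) = α²/(π·(α² + ‖v‖₂²)²) for some α > 0. Then the cross-entropy satisfies −∫_{ℝ²} f(v)·log q(v) dv = λ·π·α/2 − log(λ²/(2π)), and the Kullback–Leibler divergence satisfies D(P ‖ Q) = λ·π·α/2 − log(λ²/(2π)) − log(π·e²·α²). -/

import Mathlib

open MeasureTheory
open scoped ENNReal Real

open scoped Classical in
/-- Kullback–Leibler divergence `D(P‖Q)`, valued in the extended reals: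
it equals `∫ log (dP/dQ) dP` when `P ≪ Q` and this log-likelihood ratio is
integrable, and `+∞` otherwise. -/
noncomputable def klDiv {X : Type*} [MeasurableSpace X] (P Q : Measure X) : EReal :=
  if P ≪ Q ∧ Integrable (llr P Q) P then ((∫ x, llr P Q x ∂P : ℝ) : EReal) else ⊤

/-!
Both densities are radial, so every integral over `ℝ²` reduces to `2π ∫₀^∞ r g(r) dr`.
Writing `log q = log (λ²/(2π)) - λ r` and `log f = -log (π α²) - 2 log ((α² + r²)/α²)`, the
cross-entropy and the entropy of `P` are linear combinations of three radial integrals,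
`∫ f = 1`, `∫ f r = π α / 2` and `∫ f log ((α² + r²)/α²) = 1`, each of which has an elementary
primitive. The divergence is then `∫ f log f - ∫ f log q`, since `P` has density `f / q`
with respect to `Q`.
-/

open Set Filter Real
open scoped Topology

section KL
variable {X : Type*} [MeasurableSpace X] {μ : Measure X} {f q : X → ℝ}

theorem withDensity_ofReal_eq_withDensity_withDensity (hf : Measurable f) (hq : Measurable q)
    (hq_pos : ∀ x, 0 < q x) :
    μ.withDensity (fun x => ENNReal.ofReal (f x)) =
      (μ.withDensity fun x => ENNReal.ofReal (q x)).withDensity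
        fun x => ENNReal.ofReal (f x / q x) := by
  have hfq : Measurable fun x => f x / q x := hf.div hq
  rw [← withDensity_mul _ hq.ennreal_ofReal hfq.ennreal_ofReal]
  congr 1 with x
  rw [Pi.mul_apply, ← ENNReal.ofReal_mul (hq_pos x).le, mul_div_cancel₀ _ (hq_pos x).ne']

theorem llr_withDensity_ofReal [SigmaFinite μ] (hf : Measurable f) (hq : Measurable q)
    (hf_pos : ∀ x, 0 < f x) (hq_pos : ∀ x, 0 < q x) :
    llr (μ.withDensity fun x => ENNReal.ofReal (f x)) (μ.withDensity fun x => ENNReal.ofReal (q x))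
      =ᵐ[μ.withDensity fun x => ENNReal.ofReal (f x)] fun x => log (f x) - log (q x) := by
  have hfq : Measurable fun x => f x / q x := hf.div hq
  rw [withDensity_ofReal_eq_withDensity_withDensity hf hq hq_pos]
  filter_upwards [(withDensity_absolutelyContinuous _ _).ae_le
    (Measure.rnDeriv_withDensity _ hfq.ennreal_ofReal)] with x hx
  rw [llr, hx, ENNReal.toReal_ofReal (div_pos (hf_pos x) (hq_pos x)).le,
    log_div (hf_pos x).ne' (hq_pos x).ne']

theorem klDiv_withDensity_ofReal [SigmaFinite μ] (hf : Measurable f) (hq : Measurable q)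
    (hf_pos : ∀ x, 0 < f x) (hq_pos : ∀ x, 0 < q x)
    (hff : Integrable (fun x => f x * log (f x)) μ)
    (hfq : Integrable (fun x => f x * log (q x)) μ) :
    klDiv (μ.withDensity fun x => ENNReal.ofReal (f x))
        (μ.withDensity fun x => ENNReal.ofReal (q x)) =
      ((∫ x, f x * log (f x) ∂μ - ∫ x, f x * log (q x) ∂μ : ℝ) : EReal) := by
  have hllr := llr_withDensity_ofReal (μ := μ) hf hq hf_pos hq_pos
  have hdensity : ∀ x, (ENNReal.ofReal (f x)).toReal * (log (f x) - log (q x)) =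
      f x * log (f x) - f x * log (q x) := fun x => by
    rw [ENNReal.toReal_ofReal (hf_pos x).le, mul_sub]
  have hfinite : ∀ᵐ x ∂μ, ENNReal.ofReal (f x) < ∞ := .of_forall fun _ => ENNReal.ofReal_lt_top
  have hac : μ.withDensity (fun x => ENNReal.ofReal (f x)) ≪
      μ.withDensity fun x => ENNReal.ofReal (q x) := by
    rw [withDensity_ofReal_eq_withDensity_withDensity hf hq hq_pos]
    exact withDensity_absolutelyContinuous _ _
  have hint : Integrable (llr (μ.withDensity fun x => ENNReal.ofReal (f x))
      (μ.withDensity fun x => ENNReal.ofReal (q x)))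
      (μ.withDensity fun x => ENNReal.ofReal (f x)) := by
    rw [integrable_congr hllr, integrable_withDensity_iff hf.ennreal_ofReal hfinite]
    simp_rw [mul_comm _ (ENNReal.toReal _), hdensity]
    exact hff.sub hfq
  rw [klDiv, if_pos ⟨hac, hint⟩, integral_congr_ae hllr,
    integral_withDensity_eq_integral_toReal_smul hf.ennreal_ofReal hfinite]
  simp_rw [smul_eq_mul, hdensity]
  rw [integral_sub hff hfq]

end KL

section Radial
variable {g G : ℝ → ℝ} {l : ℝ}

theorem integral_fun_norm_euclideanSpace_two (g : ℝ → ℝ) :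
    ∫ v : EuclideanSpace ℝ (Fin 2), g ‖v‖ = 2 * π * ∫ r in Ioi 0, r * g r := by
  simp [integral_fun_norm_addHaar, Measure.real, pi_nonneg, mul_assoc]

theorem integrable_fun_norm_of_hasDerivAt (hG : ∀ r ∈ Ici 0, HasDerivAt G (r * g r) r)
    (hg : ∀ r ∈ Ioi 0, 0 ≤ g r) (hl : Tendsto G atTop (𝓝 l)) :
    Integrable fun v : EuclideanSpace ℝ (Fin 2) => g ‖v‖ := by
  rw [integrable_fun_norm_addHaar]
  simpa using integrableOn_Ioi_deriv_of_nonneg' hG (fun r hr => mul_nonneg hr.le (hg r hr)) hl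

theorem integral_fun_norm_of_hasDerivAt (hG : ∀ r ∈ Ici 0, HasDerivAt G (r * g r) r)
    (hg : ∀ r ∈ Ioi 0, 0 ≤ g r) (hl : Tendsto G atTop (𝓝 l)) :
    ∫ v : EuclideanSpace ℝ (Fin 2), g ‖v‖ = 2 * π * (l - G 0) := by
  rw [integral_fun_norm_euclideanSpace_two,
    integral_Ioi_of_hasDerivAt_of_nonneg' hG (fun r hr => mul_nonneg hr.le (hg r hr)) hl]

end Radial

theorem tendsto_add_sq_atTop (a : ℝ) : Tendsto (fun r : ℝ => a + r ^ 2) atTop atTop :=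
  tendsto_atTop_add_const_left _ a (tendsto_pow_atTop two_ne_zero)

theorem tendsto_log_add_one_div_atTop : Tendsto (fun x => (log x + 1) / x) atTop (𝓝 0) := by
  have := (tendsto_pow_log_div_mul_add_atTop 1 0 1 one_ne_zero).add tendsto_inv_atTop_zero
  simp only [pow_one, one_mul, add_zero] at this
  refine this.congr' ?_
  filter_upwards [eventually_ne_atTop 0] with x hx
  field_simp

noncomputable def ratioDensity (α r : ℝ) : ℝ := α ^ 2 / (π * (α ^ 2 + r ^ 2) ^ 2)

noncomputable def laplaceDensity (lam r : ℝ) : ℝ := lam ^ 2 / (2 * π) * exp (-lam * r)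

section RatioDensity
variable {α : ℝ}

theorem ratioDensity_nonneg (α r : ℝ) : 0 ≤ ratioDensity α r := by
  unfold ratioDensity; positivity

theorem ratioDensity_pos (hα : α ≠ 0) (r : ℝ) : 0 < ratioDensity α r := by
  unfold ratioDensity; positivity

theorem one_le_add_sq_div_sq (hα : α ≠ 0) (r : ℝ) : 1 ≤ (α ^ 2 + r ^ 2) / α ^ 2 := by
  rw [le_div_iff₀ (by positivity)]
  nlinarith [sq_nonneg r]

theorem hasDerivAt_ratioDensity_primitive (hα : α ≠ 0) (r : ℝ) :
    HasDerivAt (fun r => -(α ^ 2 / (2 * π)) * (α ^ 2 + r ^ 2)⁻¹) (r * ratioDensity α r) r := by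
  have hpos : 0 < α ^ 2 + r ^ 2 := by positivity
  refine ((((hasDerivAt_pow 2 r).const_add (α ^ 2)).inv hpos.ne').const_mul
    (-(α ^ 2 / (2 * π)))).congr_deriv ?_
  simp only [ratioDensity]
  field_simp
  ring

theorem tendsto_ratioDensity_primitive :
    Tendsto (fun r => -(α ^ 2 / (2 * π)) * (α ^ 2 + r ^ 2)⁻¹) atTop (𝓝 0) := by
  simpa using (tendsto_add_sq_atTop _).inv_tendsto_atTop.const_mul (-(α ^ 2 / (2 * π)))

theorem hasDerivAt_ratioDensity_mul_primitive (hα : 0 < α) (r : ℝ) :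
    HasDerivAt (fun r => α / (2 * π) * arctan (r / α) - α ^ 2 / (2 * π) * (r / (α ^ 2 + r ^ 2)))
      (r * (ratioDensity α r * r)) r := by
  have hpos : 0 < α ^ 2 + r ^ 2 := by positivity
  have harctan := ((hasDerivAt_id r).div_const α).arctan.const_mul (α / (2 * π))
  have hquot := ((hasDerivAt_id r).div ((hasDerivAt_pow 2 r).const_add (α ^ 2))
    hpos.ne').const_mul (α ^ 2 / (2 * π))
  refine (harctan.sub hquot).congr_deriv ?_
  simp only [ratioDensity, id]
  field_simp
  ring

theorem tendsto_ratioDensity_mul_primitive (hα : 0 < α) :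
    Tendsto (fun r => α / (2 * π) * arctan (r / α) - α ^ 2 / (2 * π) * (r / (α ^ 2 + r ^ 2)))
      atTop (𝓝 (α / 4)) := by
  have harctan : Tendsto (fun r => arctan (r / α)) atTop (𝓝 (π / 2)) :=
    (tendsto_nhds_of_tendsto_nhdsWithin tendsto_arctan_atTop).comp
      (tendsto_id.atTop_div_const hα)
  have hquot : Tendsto (fun r : ℝ => r / (α ^ 2 + r ^ 2)) atTop (𝓝 0) := by
    refine tendsto_of_tendsto_of_tendsto_of_le_of_le' tendsto_const_nhds tendsto_inv_atTop_zero
      ?_ ?_ <;> filter_upwards [eventually_gt_atTop 0] with r hr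
    · positivity
    · rw [div_le_iff₀ (by positivity)]
      field_simp
      nlinarith [sq_nonneg α]
  convert (harctan.const_mul (α / (2 * π))).sub (hquot.const_mul (α ^ 2 / (2 * π))) using 2
  field_simp
  ring

theorem hasDerivAt_ratioDensity_mul_log_primitive (hα : α ≠ 0) (r : ℝ) :
    HasDerivAt
      (fun r => -((log ((α ^ 2 + r ^ 2) / α ^ 2) + 1) / ((α ^ 2 + r ^ 2) / α ^ 2)) / (2 * π))
      (r * (ratioDensity α r * log ((α ^ 2 + r ^ 2) / α ^ 2))) r := by
  have hpos : 0 < (α ^ 2 + r ^ 2) / α ^ 2 := by positivity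
  have hw := ((hasDerivAt_pow 2 r).const_add (α ^ 2)).div_const (α ^ 2)
  refine ((((hw.log hpos.ne').add_const 1).div hw hpos.ne').neg.div_const (2 * π)).congr_deriv ?_
  simp only [ratioDensity]
  field_simp
  ring

theorem tendsto_ratioDensity_mul_log_primitive (hα : α ≠ 0) :
    Tendsto
      (fun r => -((log ((α ^ 2 + r ^ 2) / α ^ 2) + 1) / ((α ^ 2 + r ^ 2) / α ^ 2)) / (2 * π))
      atTop (𝓝 0) := by
  simpa using (tendsto_log_add_one_div_atTop.comp
    ((tendsto_add_sq_atTop _).atTop_div_const (by positivity))).neg.div_const (2 * π)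

theorem integrable_ratioDensity (hα : α ≠ 0) :
    Integrable fun v : EuclideanSpace ℝ (Fin 2) => ratioDensity α ‖v‖ :=
  integrable_fun_norm_of_hasDerivAt (fun r _ => hasDerivAt_ratioDensity_primitive hα r)
    (fun r _ => ratioDensity_nonneg α r) tendsto_ratioDensity_primitive

theorem integral_ratioDensity (hα : α ≠ 0) :
    ∫ v : EuclideanSpace ℝ (Fin 2), ratioDensity α ‖v‖ = 1 := by
  rw [integral_fun_norm_of_hasDerivAt (fun r _ => hasDerivAt_ratioDensity_primitive hα r)
    (fun r _ => ratioDensity_nonneg α r) tendsto_ratioDensity_primitive]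
  field_simp
  ring

theorem integrable_ratioDensity_mul_norm (hα : 0 < α) :
    Integrable fun v : EuclideanSpace ℝ (Fin 2) => ratioDensity α ‖v‖ * ‖v‖ :=
  integrable_fun_norm_of_hasDerivAt (fun r _ => hasDerivAt_ratioDensity_mul_primitive hα r)
    (fun r hr => mul_nonneg (ratioDensity_nonneg α r) hr.le)
    (tendsto_ratioDensity_mul_primitive hα)

theorem integral_ratioDensity_mul_norm (hα : 0 < α) :
    ∫ v : EuclideanSpace ℝ (Fin 2), ratioDensity α ‖v‖ * ‖v‖ = π * α / 2 := by
  rw [integral_fun_norm_of_hasDerivAt (fun r _ => hasDerivAt_ratioDensity_mul_primitive hα r)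
    (fun r hr => mul_nonneg (ratioDensity_nonneg α r) hr.le)
    (tendsto_ratioDensity_mul_primitive hα)]
  simp only [zero_div, arctan_zero, mul_zero, sub_zero]
  ring

theorem integrable_ratioDensity_mul_log (hα : α ≠ 0) :
    Integrable fun v : EuclideanSpace ℝ (Fin 2) =>
      ratioDensity α ‖v‖ * log ((α ^ 2 + ‖v‖ ^ 2) / α ^ 2) :=
  integrable_fun_norm_of_hasDerivAt (fun r _ => hasDerivAt_ratioDensity_mul_log_primitive hα r)
    (fun r _ => mul_nonneg (ratioDensity_nonneg α r) (log_nonneg (one_le_add_sq_div_sq hα r)))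
    (tendsto_ratioDensity_mul_log_primitive hα)

theorem integral_ratioDensity_mul_log (hα : α ≠ 0) :
    ∫ v : EuclideanSpace ℝ (Fin 2), ratioDensity α ‖v‖ * log ((α ^ 2 + ‖v‖ ^ 2) / α ^ 2) = 1 := by
  rw [integral_fun_norm_of_hasDerivAt (fun r _ => hasDerivAt_ratioDensity_mul_log_primitive hα r)
    (fun r _ => mul_nonneg (ratioDensity_nonneg α r) (log_nonneg (one_le_add_sq_div_sq hα r)))
    (tendsto_ratioDensity_mul_log_primitive hα)]
  field_simp
  simp

end RatioDensity

section Entropies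
variable {lam α : ℝ}

theorem ratioDensity_mul_log_laplaceDensity (hlam : lam ≠ 0) (α r : ℝ) :
    ratioDensity α r * log (laplaceDensity lam r) =
      log (lam ^ 2 / (2 * π)) * ratioDensity α r - lam * (ratioDensity α r * r) := by
  rw [laplaceDensity, log_mul (by positivity) (exp_pos _).ne', log_exp]
  ring

theorem log_ratioDensity (hα : α ≠ 0) (r : ℝ) :
    log (ratioDensity α r) = -log (π * α ^ 2) - 2 * log ((α ^ 2 + r ^ 2) / α ^ 2) := by
  have hsum : α ^ 2 + r ^ 2 ≠ 0 := by positivity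
  have hsq : α ^ 2 ≠ 0 := by positivity
  rw [ratioDensity, log_div hsq (by positivity), log_mul pi_ne_zero (by positivity),
    log_pow (α ^ 2 + r ^ 2) 2, log_mul pi_ne_zero hsq, log_div hsum hsq]
  push_cast
  ring

theorem ratioDensity_mul_log_ratioDensity (hα : α ≠ 0) (r : ℝ) :
    ratioDensity α r * log (ratioDensity α r) =
      -log (π * α ^ 2) * ratioDensity α r -
        2 * (ratioDensity α r * log ((α ^ 2 + r ^ 2) / α ^ 2)) := by
  rw [log_ratioDensity hα]
  ring

theorem integrable_ratioDensity_mul_log_laplaceDensity (hlam : lam ≠ 0) (hα : 0 < α) :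
    Integrable fun v : EuclideanSpace ℝ (Fin 2) =>
      ratioDensity α ‖v‖ * log (laplaceDensity lam ‖v‖) := by
  simp_rw [ratioDensity_mul_log_laplaceDensity hlam]
  exact ((integrable_ratioDensity hα.ne').const_mul _).sub
    ((integrable_ratioDensity_mul_norm hα).const_mul _)

theorem neg_integral_ratioDensity_mul_log_laplaceDensity (hlam : lam ≠ 0) (hα : 0 < α) :
    -(∫ v : EuclideanSpace ℝ (Fin 2), ratioDensity α ‖v‖ * log (laplaceDensity lam ‖v‖)) =
      lam * π * α / 2 - log (lam ^ 2 / (2 * π)) := by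
  simp_rw [ratioDensity_mul_log_laplaceDensity hlam]
  rw [integral_sub ((integrable_ratioDensity hα.ne').const_mul _)
      ((integrable_ratioDensity_mul_norm hα).const_mul _),
    integral_const_mul, integral_const_mul, integral_ratioDensity hα.ne',
    integral_ratioDensity_mul_norm hα]
  ring

theorem integrable_ratioDensity_mul_log_ratioDensity (hα : α ≠ 0) :
    Integrable fun v : EuclideanSpace ℝ (Fin 2) =>
      ratioDensity α ‖v‖ * log (ratioDensity α ‖v‖) := by
  simp_rw [ratioDensity_mul_log_ratioDensity hα]
  exact ((integrable_ratioDensity hα).const_mul _).sub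
    ((integrable_ratioDensity_mul_log hα).const_mul _)

theorem integral_ratioDensity_mul_log_ratioDensity (hα : α ≠ 0) :
    ∫ v : EuclideanSpace ℝ (Fin 2), ratioDensity α ‖v‖ * log (ratioDensity α ‖v‖) =
      -log (π * exp 2 * α ^ 2) := by
  simp_rw [ratioDensity_mul_log_ratioDensity hα]
  rw [integral_sub ((integrable_ratioDensity hα).const_mul _)
      ((integrable_ratioDensity_mul_log hα).const_mul _),
    integral_const_mul, integral_const_mul, integral_ratioDensity hα,
    integral_ratioDensity_mul_log hα, mul_right_comm π (exp 2),
    log_mul (by positivity) (exp_pos 2).ne', log_exp]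
  ring

end Entropies

/-- **Cross-entropy and KL divergence between the ratio density and the bivariate
isotropic Laplace density.**  With `q(v) = (λ²/(2π)) exp (-λ‖v‖₂)` and
`f(v) = α²/(π (α² + ‖v‖₂²)²)` on `ℝ²`, the cross-entropy is
`-∫ f log q = λπα/2 - log (λ²/(2π))` and
`D(P‖Q) = λπα/2 - log (λ²/(2π)) - log (π e² α²)`. -/
theorem crossEntropy_klDiv_ratio_laplace (lam α : ℝ) (hlam : 0 < lam) (hα : 0 < α) :
    (-(∫ v : EuclideanSpace ℝ (Fin 2),
          (α ^ 2 / (π * (α ^ 2 + ‖v‖ ^ 2) ^ 2)) *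
            Real.log (lam ^ 2 / (2 * π) * Real.exp (-lam * ‖v‖))) =
        lam * π * α / 2 - Real.log (lam ^ 2 / (2 * π))) ∧
      klDiv
          (volume.withDensity fun v : EuclideanSpace ℝ (Fin 2) =>
            ENNReal.ofReal (α ^ 2 / (π * (α ^ 2 + ‖v‖ ^ 2) ^ 2)))
          (volume.withDensity fun v : EuclideanSpace ℝ (Fin 2) =>
            ENNReal.ofReal (lam ^ 2 / (2 * π) * Real.exp (-lam * ‖v‖))) =
        ((lam * π * α / 2 - Real.log (lam ^ 2 / (2 * π)) -
            Real.log (π * Real.exp 2 * α ^ 2) : ℝ) : EReal) := by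
  have hcross := neg_integral_ratioDensity_mul_log_laplaceDensity hlam.ne' hα
  refine ⟨hcross, (klDiv_withDensity_ofReal (f := fun v => ratioDensity α ‖v‖)
    (q := fun v => laplaceDensity lam ‖v‖) (by unfold ratioDensity; fun_prop)
    (by unfold laplaceDensity; fun_prop) (fun v => ratioDensity_pos hα.ne' ‖v‖)
    (fun v => by unfold laplaceDensity; positivity)
    (integrable_ratioDensity_mul_log_ratioDensity hα.ne')
    (integrable_ratioDensity_mul_log_laplaceDensity hlam.ne' hα)).trans ?_⟩
  rw [integral_ratioDensity_mul_log_ratioDensity hα.ne', sub_eq_add_neg, hcross]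
  norm_cast
  ring
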